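/- Let A be a unital associative algebra over a field F and let R be a Rota–Baxter operator of weight −1 on A. Set a = R(1) and, for natural numbers r, s, let H_{r,s}(x) = Π_{k=0}^{r+s−1}(x − r + k). Then for all r, s ≥ 0: (r+s)! · ((R − id)^r ∘ R^s)(1) = H_{r,s}(a). -/

import Mathlib

/-- The polynomial `H_{r,s}(x) = (x−r)(x−r+1)⋯x(x+1)⋯(x+s−1) = Π_{k=0}^{r+s−1} (x−r+k)`. -/
noncomputable def Hpoly (F : Type*) [Field F] (r s : ℕ) : Polynomial F :=
  ∏ k ∈ Finset.range (r + s), (Polynomial.X - (r : Polynomial F) + (k : Polynomial F))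

/-! On polynomials in `a = R 1`, the operator `R` behaves like an inverse of the backward
difference `f(x) ↦ f(x) - f(x-1)`. The Rota–Baxter identity with `x = 1` reads
`a R(P) = R(aP) + R(R P) + θ R(P)`; for `P` commuting with `a` it turns `n R(P) = P (a + c)` into
`(n + 1) R(P (a + c)) = P (a + c) (a + c - θ)`. Starting from `R 1 = a` this gives
`(s + 1) R(H_{0,s}(a)) = H_{0,s+1}(a)`. Since `R - id` is again a Rota–Baxter operator, of
weight `+1`, with `(R - id)(1) = a - 1`, the same step gives
`(r + s + 1) (R - id)(H_{r,s}(a)) = H_{r+1,s}(a)`, and the formula follows by induction on `s`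
and then on `r`. -/

open Polynomial

section RotaBaxter

variable {F A : Type*} [CommRing F] [Ring A] [Algebra F A]

def IsRotaBaxter (θ : F) (R : A →ₗ[F] A) : Prop :=
  ∀ x y : A, R x * R y = R (R x * y + x * R y + θ • (x * y))

variable {θ : F} {R : A →ₗ[F] A}

theorem IsRotaBaxter.add_smul_id (hR : IsRotaBaxter θ R) :
    IsRotaBaxter (-θ) (R + θ • LinearMap.id) := by
  intro x y
  simp only [LinearMap.add_apply, LinearMap.smul_apply, LinearMap.id_apply, add_mul, mul_add,
    smul_mul_assoc, mul_smul_comm, hR x y]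
  simp only [map_add, map_smul, smul_add]
  module

theorem IsRotaBaxter.sub_id (hR : IsRotaBaxter (-1) R) : IsRotaBaxter 1 (R - LinearMap.id) := by
  convert hR.add_smul_id using 1
  · rw [neg_neg]
  · ext; simp [sub_eq_add_neg]

theorem IsRotaBaxter.add_one_smul_apply_mul (hR : IsRotaBaxter θ R) {P : A} {n c : F}
    (hP : Commute (R 1) P) (h : n • R P = P * (R 1 + algebraMap F A c)) :
    (n + 1) • R (P * (R 1 + algebraMap F A c)) =
      P * (R 1 + algebraMap F A c) * (R 1 + algebraMap F A (c - θ)) := by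
  set a := R 1
  set Q := P * (a + algebraMap F A c) with hQ_def
  have hQ : Q = a * P + c • P := by
    rw [hQ_def, mul_add, ← hP.eq, ← Algebra.commutes, Algebra.smul_def]
  have hQa : Commute Q a :=
    hP.symm.mul_left ((Commute.refl a).add_left (Algebra.commutes c a))
  have hRaP : a * R P = R (a * P) + R (R P) + θ • R P := by
    simpa only [one_mul, map_add, map_smul] using hR 1 P
  have haQ : a * Q = n • R (a * P) + R Q + θ • Q :=
    calc a * Q = n • (a * R P) := by rw [← h, mul_smul_comm]
      _ = n • R (a * P) + R (n • R P) + θ • (n • R P) := by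
        rw [hRaP, smul_add, smul_add, map_smul, smul_comm n θ]
      _ = n • R (a * P) + R Q + θ • Q := by rw [h]
  calc (n + 1) • R Q
      = n • R (a * P) + c • (n • R P) + R Q := by
        rw [add_smul, one_smul, hQ, map_add, map_smul, smul_add, smul_comm n c]
    _ = a * Q - θ • Q + c • Q := by rw [haQ, h]; abel
    _ = Q * (a + algebraMap F A (c - θ)) := by
        rw [mul_add, ← hQa.eq, ← Algebra.commutes, ← Algebra.smul_def, sub_smul]; abel

end RotaBaxter

section Hpoly

variable (F : Type*) [Field F]

theorem Hpoly_succ_right (r s : ℕ) : Hpoly F r (s + 1) = Hpoly F r s * (X + C (s : F)) := by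
  rw [Hpoly, ← add_assoc, Finset.prod_range_succ, Hpoly, map_natCast]
  push_cast
  ring

theorem Hpoly_succ_left (r s : ℕ) :
    Hpoly F (r + 1) s = Hpoly F r s * (X - C ((r : F) + 1)) := by
  rw [Hpoly, add_right_comm, Finset.prod_range_succ', Hpoly]
  push_cast
  congr 1
  · exact Finset.prod_congr rfl fun k _ => by ring
  · rw [map_add, map_one, map_natCast]; ring

end Hpoly

theorem Polynomial.commute_self_aeval {F A : Type*} [CommSemiring F] [Semiring A] [Algebra F A]
    (a : A) (p : F[X]) : Commute a (aeval a p) := by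
  simpa using (Commute.all X p).map (aeval a)

section WeightMinusOne

variable {F A : Type*} [Field F] [Ring A] [Algebra F A] {R : A →ₗ[F] A}

theorem IsRotaBaxter.natCast_smul_apply_aeval_Hpoly_zero_left (hR : IsRotaBaxter (-1) R)
    (s : ℕ) : ((s + 1 : ℕ) : F) • R (aeval (R 1) (Hpoly F 0 s)) =
      aeval (R 1) (Hpoly F 0 (s + 1)) := by
  induction s with
  | zero => simp [Hpoly]
  | succ s ih =>
    rw [Hpoly_succ_right, map_mul, map_add, aeval_X, aeval_C] at ih
    have step := hR.add_one_smul_apply_mul (commute_self_aeval _ _) ih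
    rw [Hpoly_succ_right F 0 (s + 1), Hpoly_succ_right F 0 s]
    simp only [map_mul, map_add, aeval_X, aeval_C] at step ⊢
    rw [sub_neg_eq_add] at step
    push_cast at step ⊢
    exact step

theorem IsRotaBaxter.natCast_smul_sub_id_apply_aeval_Hpoly (hR : IsRotaBaxter (-1) R)
    (r s : ℕ) :
    ((r + s + 1 : ℕ) : F) • (R - LinearMap.id : A →ₗ[F] A) (aeval (R 1) (Hpoly F r s)) =
      aeval (R 1) (Hpoly F (r + 1) s) := by
  have hS1 (k : F) : R 1 - algebraMap F A (k + 1) =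
      (R - LinearMap.id : A →ₗ[F] A) 1 + algebraMap F A (-k) := by
    simp only [map_add, map_neg, map_one, LinearMap.sub_apply, LinearMap.id_apply]
    abel
  induction r with
  | zero =>
    rw [zero_add, LinearMap.sub_apply, LinearMap.id_apply, smul_sub,
      hR.natCast_smul_apply_aeval_Hpoly_zero_left, Hpoly_succ_right, Hpoly_succ_left]
    simp only [map_mul, map_add, map_sub, aeval_X, aeval_C]
    rw [Nat.cast_zero, map_zero, zero_add, map_one (algebraMap F A), Algebra.smul_def,
      Algebra.commutes, ← mul_sub, Nat.cast_succ, map_add, map_one (algebraMap F A)]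
    congr 1
    abel
  | succ r ih =>
    rw [Hpoly_succ_left] at ih
    simp only [map_mul, map_sub, aeval_X, aeval_C, hS1] at ih
    have hcomm : Commute ((R - LinearMap.id : A →ₗ[F] A) 1) (aeval (R 1) (Hpoly F r s)) := by
      simpa using (commute_self_aeval (R 1) (Hpoly F r s)).sub_left (Commute.one_left _)
    have step := hR.sub_id.add_one_smul_apply_mul hcomm ih
    rw [Hpoly_succ_left F (r + 1), Hpoly_succ_left F r]
    simp only [map_mul, map_sub, aeval_X, aeval_C, hS1]
    convert step using 3 <;> push_cast
    · ring
    · exact neg_add' _ _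

theorem IsRotaBaxter.factorial_smul_pow_apply_one (hR : IsRotaBaxter (-1) R) (s : ℕ) :
    (s.factorial : F) • (R ^ s) 1 = aeval (R 1) (Hpoly F 0 s) := by
  induction s with
  | zero => simp [Hpoly]
  | succ s ih =>
    rw [Nat.factorial_succ, Nat.cast_mul, mul_smul, pow_succ', Module.End.mul_apply, ← map_smul,
      ih, hR.natCast_smul_apply_aeval_Hpoly_zero_left]

end WeightMinusOne

/-- For a unital associative algebra `A` over a field `F` and a Rota–Baxter
operator `R` of weight `−1` on `A` with `a = R(1)`, one has
`(r+s)! · ((R − id)^r ∘ R^s)(1) = H_{r,s}(a)` for all `r, s ≥ 0`. -/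
theorem rb_H_formula
    {F : Type*} [Field F] {A : Type*} [Ring A] [Algebra F A]
    (R : A →ₗ[F] A)
    (hR : ∀ x y : A, R x * R y = R (R x * y + x * R y + (-1 : F) • (x * y))) :
    ∀ r s : ℕ,
      ((Nat.factorial (r + s) : F))
          • (((R - LinearMap.id) ^ r : A →ₗ[F] A) ((R ^ s) (1 : A)))
        = Polynomial.aeval (R (1 : A)) (Hpoly F r s) := by
  intro r s
  induction r with
  | zero => simpa using IsRotaBaxter.factorial_smul_pow_apply_one hR s
  | succ r ih =>
    rw [add_right_comm, Nat.factorial_succ, Nat.cast_mul, mul_smul, pow_succ',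
      Module.End.mul_apply, ← map_smul, ih,
      IsRotaBaxter.natCast_smul_sub_id_apply_aeval_Hpoly hR]
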